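/- Let H ≥ 2 and let I = {0,1,2} ∪ {2H}, J = {0,1} ∪ {2H-1, 2H}. For h = 2H - 2: |hI| = 3H² - 2H and |hJ| = (2H-1)², hence |hJ| - |hI| = (H-1)² > 0. -/

import Mathlib

open Finset Pointwise

/-- `hsum h A` is the `h`-fold sumset of `A` (pointwise sum of `h` copies). -/
def hsum (h : ℕ) (A : Finset ℤ) : Finset ℤ := ∑ _i ∈ Finset.range h, A

/-- `transl t A` is the translate `t + A`. -/
def transl (t : ℤ) (A : Finset ℤ) : Finset ℤ := A.image (t + ·)

/-!
Sorting the summands of an element of `h(A ∪ B)` by how many of them lie in `B` writes both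
sumsets as unions of intervals `[c j, c j + ℓ j]`, `0 ≤ j ≤ h`, where `j` counts the summands
taken from the top pair resp. the top point. For `J` (`c = 2H - 1`, `ℓ j = h = c - 1`)
consecutive intervals abut, so `hJ = [0, (2H - 1)² - 1]`. For `I` (`c = 2H`, `ℓ j = 2(h - j)`)
they overlap up to `j = H - 1`, which gives `[0, 2H² - 2]`; beyond that they are shorter than
`c`, hence pairwise disjoint, and their lengths `2H - 3, …, 3, 1` add up to `(H - 1)²`.
-/

theorem hsum_zero (A : Finset ℤ) : hsum 0 A = {0} := rfl

theorem hsum_succ (h : ℕ) (A : Finset ℤ) : hsum (h + 1) A = A + hsum h A := by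
  rw [hsum, sum_range_succ, add_comm, hsum]

theorem Int.Icc_add_Icc {a b c d : ℤ} (hab : a ≤ b) (hcd : c ≤ d) :
    Icc a b + Icc c d = Icc (a + c) (b + d) := by
  ext x
  simp only [mem_add, mem_Icc]
  constructor
  · rintro ⟨u, hu, v, hv, rfl⟩
    omega
  · intro hx
    exact ⟨max a (x - d), by omega, x - max a (x - d), by omega, by ring⟩

theorem hsum_Icc (h : ℕ) {a b : ℤ} (hab : a ≤ b) :
    hsum h (Icc a b) = Icc (h * a) (h * b) := by
  induction h with
  | zero => simp [hsum_zero]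
  | succ h ih =>
    rw [hsum_succ, ih, Int.Icc_add_Icc hab (by gcongr)]
    push_cast
    ring_nf

theorem mem_hsum_union {h : ℕ} {A B : Finset ℤ} {x : ℤ} :
    x ∈ hsum h (A ∪ B) ↔ ∃ i j, i + j = h ∧ x ∈ hsum i A + hsum j B := by
  induction h generalizing x with
  | zero => simp [hsum_zero]
  | succ h ih =>
    simp only [hsum_succ, mem_add, mem_union, ih]
    constructor
    · rintro ⟨a, ha | ha, y, ⟨i, j, rfl, u, hu, v, hv, rfl⟩, rfl⟩
      · exact ⟨i + 1, j, by ring, a + u, (hsum_succ i A).symm ▸ add_mem_add ha hu, v, hv,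
          by ring⟩
      · exact ⟨i, j + 1, by ring, u, hu, a + v, (hsum_succ j B).symm ▸ add_mem_add ha hv,
          by ring⟩
    · rintro ⟨i | i, j, hij, u, hu, v, hv, rfl⟩
      · obtain rfl : j = h + 1 := by omega
        obtain rfl : u = 0 := by simpa [hsum_zero] using hu
        obtain ⟨b, hb, w, hw, rfl⟩ := mem_add.1 ((hsum_succ h B) ▸ hv)
        exact ⟨b, .inr hb, w, ⟨0, h, by omega, 0, by simp [hsum_zero], w, hw, by ring⟩,
          by ring⟩
      · obtain ⟨a, ha, w, hw, rfl⟩ := mem_add.1 ((hsum_succ i A) ▸ hu)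
        exact ⟨a, .inl ha, w + v, ⟨i, j, by omega, w, hw, v, hv, rfl⟩, by ring⟩

theorem hsum_union (h : ℕ) (A B : Finset ℤ) :
    hsum h (A ∪ B) = (range (h + 1)).biUnion fun j => hsum (h - j) A + hsum j B := by
  ext x
  simp only [mem_hsum_union, mem_biUnion, mem_range, Nat.lt_succ_iff]
  constructor
  · rintro ⟨i, j, rfl, hx⟩
    exact ⟨j, by omega, by rwa [Nat.add_sub_cancel]⟩
  · rintro ⟨j, hj, hx⟩
    exact ⟨h - j, j, by omega, hx⟩

theorem hsum_Icc_union_Icc (h : ℕ) {a b c d : ℤ} (hab : a ≤ b) (hcd : c ≤ d) :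
    hsum h (Icc a b ∪ Icc c d) = (range (h + 1)).biUnion fun j =>
      Icc ((h - j : ℕ) * a + j * c) ((h - j : ℕ) * b + j * d) := by
  rw [hsum_union]
  refine biUnion_congr rfl fun j _ => ?_
  rw [hsum_Icc _ hab, hsum_Icc _ hcd, Int.Icc_add_Icc (by gcongr) (by gcongr)]

theorem biUnion_range_Icc_eq_Icc {a b : ℕ → ℤ} {N : ℕ} (ha : ∀ j ≤ N, a 0 ≤ a j)
    (hb : ∀ j ≤ N, b j ≤ b N) (hgap : ∀ j < N, a (j + 1) ≤ b j + 1) :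
    (range (N + 1)).biUnion (fun j => Icc (a j) (b j)) = Icc (a 0) (b N) := by
  ext x
  simp only [mem_biUnion, mem_range, Nat.lt_succ_iff, mem_Icc]
  constructor
  · rintro ⟨j, hj, hxa, hxb⟩
    exact ⟨(ha j hj).trans hxa, hxb.trans (hb j hj)⟩
  · rintro ⟨hxa, hxb⟩
    -- the last interval starting at or before `x` contains it
    set j := Nat.findGreatest (fun j => a j ≤ x) N
    have hjN : j ≤ N := Nat.findGreatest_le N
    refine ⟨j, hjN, Nat.findGreatest_spec (P := fun j => a j ≤ x) (Nat.zero_le N) hxa, ?_⟩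
    rcases hjN.lt_or_eq with hj | hj
    · have := Nat.findGreatest_is_greatest (Nat.lt_succ_self j) hj
      linarith [hgap j hj]
    · rwa [hj]

theorem card_biUnion_Icc_mul {c : ℤ} {ℓ : ℕ → ℕ} {s : Finset ℕ}
    (hℓ : ∀ j ∈ s, (ℓ j : ℤ) < c) :
    (s.biUnion fun j => Icc (c * j) (c * j + ℓ j)).card = ∑ j ∈ s, (ℓ j + 1) := by
  rw [card_biUnion]
  · refine sum_congr rfl fun j _ => ?_
    rw [Int.card_Icc]
    omega
  · intro j hj k hk hjk
    rw [Function.onFun, disjoint_left]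
    intro x hxj hxk
    simp only [mem_Icc] at hxj hxk
    have hc := (Nat.cast_nonneg (ℓ j)).trans_lt (hℓ j hj)
    rcases hjk.lt_or_gt with h | h
    · have : (j : ℤ) + 1 ≤ k := by exact_mod_cast h
      nlinarith [mul_le_mul_of_nonneg_left this hc.le, hℓ j hj]
    · have : (k : ℤ) + 1 ≤ j := by exact_mod_cast h
      nlinarith [mul_le_mul_of_nonneg_left this hc.le, hℓ k hk]

theorem sum_range_two_mul_add_one (m : ℕ) : ∑ i ∈ range m, (2 * i + 1) = m ^ 2 := by
  induction m with
  | zero => rfl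
  | succ m ih => rw [sum_range_succ, ih]; ring

theorem hsum_J_eq_Icc (m : ℕ) :
    hsum (2 * m) (Icc 0 1 ∪ Icc (2 * m + 1) (2 * m + 2)) = Icc 0 ((2 * m + 1) ^ 2 - 1 : ℤ) := by
  rw [hsum_Icc_union_Icc _ (by norm_num) (by omega)]
  have hterm : ∀ j ∈ range (2 * m + 1), Icc ((2 * m - j : ℕ) * (0 : ℤ) + j * (2 * m + 1))
      ((2 * m - j : ℕ) * 1 + j * (2 * m + 2)) =
        Icc ((2 * m + 1) * (j : ℤ)) ((2 * m + 1) * j + 2 * m) := by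
    intro j hj
    have : ((2 * m - j : ℕ) : ℤ) = 2 * m - j := by rw [mem_range] at hj; omega
    rw [this]
    congr 1 <;> ring
  rw [biUnion_congr rfl hterm, biUnion_range_Icc_eq_Icc]
  · congr 1
    push_cast
    ring
  · intro j _; positivity
  · intro j hj; gcongr
  · intro j _; push_cast; linarith

theorem hsum_I_eq_Icc_union (m : ℕ) :
    hsum (2 * m) (Icc 0 2 ∪ Icc (2 * m + 2) (2 * m + 2)) = Icc 0 (2 * m ^ 2 + 4 * m : ℤ) ∪
      (Ico (m + 1) (2 * m + 1)).biUnion fun j =>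
        Icc ((2 * m + 2) * (j : ℤ)) ((2 * m + 2) * j + ↑(2 * (2 * m - j))) := by
  rw [hsum_Icc_union_Icc _ (by norm_num) le_rfl]
  have hterm : ∀ j ∈ range (2 * m + 1), Icc ((2 * m - j : ℕ) * (0 : ℤ) + j * (2 * m + 2))
      ((2 * m - j : ℕ) * 2 + j * (2 * m + 2)) =
        Icc ((2 * m + 2) * (j : ℤ)) ((2 * m + 2) * j + ↑(2 * (2 * m - j))) := by
    intro j _
    push_cast
    congr 1 <;> ring
  rw [biUnion_congr rfl hterm, range_eq_Ico,
    ← Ico_union_Ico_eq_Ico (Nat.zero_le (m + 1)) (by omega), union_biUnion,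
    ← range_eq_Ico, biUnion_range_Icc_eq_Icc]
  · push_cast [Nat.cast_sub (show m ≤ 2 * m by omega)]
    ring_nf
  · intro j _; positivity
  · intro j hj
    push_cast [Nat.cast_sub (show j ≤ 2 * m by omega), Nat.cast_sub (show m ≤ 2 * m by omega)]
    nlinarith
  · intro j hj
    push_cast [Nat.cast_sub (show j ≤ 2 * m by omega)]
    nlinarith

theorem card_hsum_I {n : ℕ} (hn : 0 < n) :
    (hsum (2 * n - 2) ({0, 1, 2} ∪ {2 * (n : ℤ)})).card = 3 * n ^ 2 - 2 * n := by
  obtain ⟨m, rfl⟩ : ∃ m, n = m + 1 := ⟨n - 1, by omega⟩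
  have hI : ({0, 1, 2} ∪ {2 * ((m + 1 : ℕ) : ℤ)} : Finset ℤ) =
      Icc 0 2 ∪ Icc (2 * (m : ℤ) + 2) (2 * m + 2) := by
    ext x
    simp only [mem_union, mem_insert, mem_singleton, mem_Icc]
    omega
  have hdisj : Disjoint (Icc 0 (2 * m ^ 2 + 4 * m : ℤ))
      ((Ico (m + 1) (2 * m + 1)).biUnion fun j =>
        Icc ((2 * m + 2) * (j : ℤ)) ((2 * m + 2) * j + ↑(2 * (2 * m - j)))) := by
    simp only [disjoint_left, mem_Icc, mem_biUnion, mem_Ico, not_exists, not_and]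
    intro x hx j hj hjx
    have : ((m : ℤ) + 1) ≤ j := by exact_mod_cast hj.1
    nlinarith
  have hodd : ∑ j ∈ Ico (m + 1) (2 * m + 1), (2 * (2 * m - j) + 1) = m ^ 2 := by
    rw [sum_Ico_reflect (fun i => 2 * i + 1) (m + 1) le_rfl, Nat.sub_self,
      show 2 * m + 1 - (m + 1) = m by omega, ← range_eq_Ico, sum_range_two_mul_add_one]
  rw [show 2 * (m + 1) - 2 = 2 * m by omega, hI, hsum_I_eq_Icc_union, card_union_of_disjoint hdisj,
    card_biUnion_Icc_mul, hodd, Int.card_Icc]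
  · rw [sub_zero, show 2 * (m : ℤ) ^ 2 + 4 * m + 1 = ((2 * m ^ 2 + 4 * m + 1 : ℕ) : ℤ) by
      push_cast; ring, Int.toNat_natCast]
    have : 3 * (m + 1) ^ 2 = 2 * m ^ 2 + 4 * m + 1 + m ^ 2 + 2 * (m + 1) := by ring
    omega
  · intro j hj
    rw [mem_Ico] at hj
    omega

theorem card_hsum_J {n : ℕ} (hn : 0 < n) :
    (hsum (2 * n - 2) ({0, 1} ∪ {2 * (n : ℤ) - 1, 2 * (n : ℤ)})).card = (2 * n - 1) ^ 2 := by
  obtain ⟨m, rfl⟩ : ∃ m, n = m + 1 := ⟨n - 1, by omega⟩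
  have hJ : ({0, 1} ∪ {2 * ((m + 1 : ℕ) : ℤ) - 1, 2 * ((m + 1 : ℕ) : ℤ)} : Finset ℤ) =
      Icc 0 1 ∪ Icc (2 * (m : ℤ) + 1) (2 * m + 2) := by
    ext x
    simp only [mem_union, mem_insert, mem_singleton, mem_Icc]
    omega
  rw [show 2 * (m + 1) - 2 = 2 * m by omega, hJ, hsum_J_eq_Icc, Int.card_Icc, sub_add_cancel,
    sub_zero, show 2 * (m + 1) - 1 = 2 * m + 1 by omega]
  exact_mod_cast Int.toNat_natCast ((2 * m + 1) ^ 2)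

theorem stmt_17 (H : ℕ) (hH : 2 ≤ H) :
    (hsum (2 * H - 2) ({0, 1, 2} ∪ {2 * (H : ℤ)})).card = 3 * H ^ 2 - 2 * H ∧
    (hsum (2 * H - 2) ({0, 1} ∪ {2 * (H : ℤ) - 1, 2 * (H : ℤ)})).card = (2 * H - 1) ^ 2 ∧
    ((hsum (2 * H - 2) ({0, 1} ∪ {2 * (H : ℤ) - 1, 2 * (H : ℤ)})).card : ℤ) -
        ((hsum (2 * H - 2) ({0, 1, 2} ∪ {2 * (H : ℤ)})).card : ℤ) = ((H : ℤ) - 1) ^ 2 ∧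
    0 < ((H : ℤ) - 1) ^ 2 := by
  rw [card_hsum_I (by omega), card_hsum_J (by omega)]
  refine ⟨rfl, rfl, ?_, pow_pos (by omega) 2⟩
  have h3 : 2 * H ≤ 3 * H ^ 2 := by nlinarith
  push_cast [Nat.cast_sub h3, Nat.cast_sub (show 1 ≤ 2 * H by omega)]
  ring
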